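/- arXiv:2108.03610 — 3 statements merged into one kernel-verified Lean document; each statement's English description precedes it below -/
import Mathlib

section
/- Let X be a topological space, x ∈ X, and let H be a subgroup of π₁(X, x). Then π_H^qs(X, x) = H · π₁^qs(X, x), the product of the subgroups H and π₁^qs(X, x) in π₁(X, x). -/
open unitInterval

noncomputable section

attribute [local instance] Path.Homotopic.setoid

variable {X Y : Type*} [TopologicalSpace X] [TopologicalSpace Y]

/-- `HClose f g` : the path `f` is homotopically close to the path `g` rel `∂I`:
for every partition `0 = t₀ < t₁ < ⋯ < tₙ = 1` and every sequence of open sets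
`U₁, …, Uₙ` with `g [tᵢ₋₁, tᵢ] ⊆ Uᵢ`, there is a path `γ`, homotopic to `f` rel `∂I`,
with `γ [tᵢ₋₁, tᵢ] ⊆ Uᵢ` and `γ tᵢ = g tᵢ` for all `i`. -/
def HClose {a b : X} (f g : Path a b) : Prop :=
  ∀ (n : ℕ) (t : Fin (n + 1) → I), t 0 = 0 → t (Fin.last n) = 1 → StrictMono t →
    ∀ U : Fin n → Set X, (∀ i, IsOpen (U i)) →
      (∀ i : Fin n, g '' Set.Icc (t i.castSucc) (t i.succ) ⊆ U i) →
      ∃ γ : Path a b,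
        (∀ i : Fin n, γ '' Set.Icc (t i.castSucc) (t i.succ) ⊆ U i) ∧
        (∀ i : Fin (n + 1), γ (t i) = g (t i)) ∧ γ.Homotopic f

/-- The class of a loop at `x` as an element of the fundamental group. -/
def pathClass {x : X} (f : Path x x) : FundamentalGroup X x :=
  FundamentalGroup.fromPath ⟦f⟧

/-- The `H`-quasi-small loop set `π_H^qs(X, x)`. -/
def qsSet (x : X) (H : Set (FundamentalGroup X x)) : Set (FundamentalGroup X x) :=
  { p | ∃ f h : Path x x, pathClass f = p ∧ pathClass h ∈ H ∧ HClose f h }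

/-- The quasi-small loop group `π₁^qs(X, x)`. -/
def qs (x : X) : Set (FundamentalGroup X x) :=
  qsSet x (⊥ : Subgroup (FundamentalGroup X x))

/-- The Spanier group of `(X, x)` with respect to the cover `𝒰`. -/
def spanierCover (x : X) (𝒰 : Set (Set X)) : Subgroup (FundamentalGroup X x) :=
  Subgroup.closure { p | ∃ (y : X) (u : Path x y) (v : Path y y) (U : Set X),
    U ∈ 𝒰 ∧ Set.range v ⊆ U ∧ p = pathClass ((u.trans v).trans u.symm) }

/-- The (unbased) Spanier group `π₁^sp(X, x)`. -/
def spanierGroup (x : X) : Subgroup (FundamentalGroup X x) :=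
  ⨅ (𝒰 : Set (Set X)) (_ : ∀ U ∈ 𝒰, IsOpen U) (_ : ⋃₀ 𝒰 = Set.univ), spanierCover x 𝒰

/-- The small generated subgroup `π₁^sg(X, x)`. -/
def smallGenerated (x : X) : Subgroup (FundamentalGroup X x) :=
  Subgroup.closure { p | ∃ (y : X) (β : Path x y) (α : Path y y),
    HClose α (Path.refl y) ∧ p = pathClass ((β.trans α).trans β.symm) }

/-- `X` is homotopically path Hausdorff relative to `H ⊆ π₁(X, x)`. -/
def HPHausdorffRel (x : X) (H : Set (FundamentalGroup X x)) : Prop :=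
  ∀ (y : X) (α β : Path x y), pathClass (α.trans β.symm) ∉ H →
    ∃ (n : ℕ) (t : Fin (n + 1) → I), t 0 = 0 ∧ t (Fin.last n) = 1 ∧ StrictMono t ∧
      ∃ U : Fin n → Set X, (∀ i, IsOpen (U i)) ∧
        (∀ i : Fin n, α '' Set.Icc (t i.castSucc) (t i.succ) ⊆ U i) ∧
        ∀ γ : Path x y, (∀ i : Fin n, γ '' Set.Icc (t i.castSucc) (t i.succ) ⊆ U i) →
          (∀ i : Fin (n + 1), γ (t i) = α (t i)) → pathClass (γ.trans β.symm) ∉ H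

/-! The key fact is that homotopic closeness survives concatenation with a fixed path `c` on the
right: a partition of `[0,1]` adapted to `g ⋆ c` yields, by keeping its points below `1/2`,
doubling them and closing up with `1`, a partition adapted to `g`; the path `γ` that closeness of
`f` to `g` provides for it gives `γ ⋆ c`, which is homotopic to `f ⋆ c` and agrees with `g ⋆ c` on
`[1/2, 1]`.

Then if `f` is close to `h` with `[h] ∈ H`, the class of `f` is `[h]` times the class of `f ⋆ h⁻¹`,
which is close to the null-homotopic `h ⋆ h⁻¹`. Conversely, if `u = [a] ∈ H` and `f` is close to
a null-homotopic `h`, then `u · [f] = [f ⋆ a]` with `f ⋆ a` close to `h ⋆ a`, whose class is `u`. -/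

theorem Monotone.exists_forall_lt_iff_val_lt {α : Type*} [Preorder α] {n : ℕ} {t : Fin n → α}
    (ht : Monotone t) (c : α) : ∃ m ≤ n, ∀ i, t i < c ↔ (i : ℕ) < m := by
  classical
  have hex : ∃ m, ∀ i : Fin n, m ≤ (i : ℕ) → ¬ t i < c := ⟨n, fun i hi => absurd i.2 (by omega)⟩
  refine ⟨Nat.find hex, Nat.find_le fun i hi => absurd i.2 (by omega), fun i => ⟨?_, ?_⟩⟩
  · intro hi
    by_contra! hle
    exact Nat.find_spec hex i hle hi
  · intro hi
    by_contra hc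
    exact Nat.find_min hex hi fun j hij hj => hc (lt_of_le_of_lt (ht (Fin.le_def.2 hij)) hj)

namespace unitInterval

def double (t : I) : I := Set.projIcc 0 1 zero_le_one (2 * t)

lemma coe_double_of_le_half {t : I} (ht : (t : ℝ) ≤ 1 / 2) : (double t : ℝ) = 2 * t := by
  rw [double, Set.projIcc_of_mem _ ⟨by have := t.2.1; linarith, by linarith⟩]

lemma double_zero : double 0 = 0 := by simp [double]

lemma double_eq_one {t : I} (ht : 1 / 2 ≤ (t : ℝ)) : double t = 1 :=
  Set.projIcc_eq_right zero_lt_one |>.2 (by linarith)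

lemma monotone_double : Monotone double :=
  (Set.monotone_projIcc _).comp fun _ _ h => by simpa using h

lemma coe_double_le (t : I) : (double t : ℝ) ≤ 2 * t :=
  max_le (by have := t.2.1; linarith) (min_le_right _ _)

lemma double_lt_double {a b : I} (ha : (a : ℝ) < 1 / 2) (hab : a < b) : double a < double b := by
  rw [← Subtype.coe_lt_coe, coe_double_of_le_half ha.le, double, Set.coe_projIcc]
  have : (a : ℝ) < b := hab
  exact lt_max_of_lt_right (lt_min (by linarith) (by linarith))

def half (t : I) : I := ⟨t / 2, by have := t.2.1; linarith, by have := t.2.2; linarith⟩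

lemma double_half (t : I) : double (half t) = t :=
  Subtype.ext <| (coe_double_of_le_half (by have := t.2.2; simp [half]; linarith)).trans
    (by simp [half]; ring)

end unitInterval

namespace Path

variable {x y z : X}

lemma trans_apply_of_le_half (γ : Path x y) (γ' : Path y z) {t : I} (ht : (t : ℝ) ≤ 1 / 2) :
    (γ.trans γ') t = γ (double t) := by
  rw [trans_apply, dif_pos ht]
  exact congrArg γ (Subtype.ext (coe_double_of_le_half ht).symm)

lemma trans_apply_half (γ : Path x y) (γ' : Path y z) (t : I) :
    (γ.trans γ') (half t) = γ t := by
  rw [trans_apply_of_le_half _ _ (by have := t.2.2; simp [half]; linarith), double_half]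

lemma trans_apply_eq_of_half_le (γ₁ γ₂ : Path x y) (γ' : Path y z) {t : I}
    (ht : 1 / 2 ≤ (t : ℝ)) : (γ₁.trans γ') t = (γ₂.trans γ') t := by
  rcases ht.eq_or_lt with h | h
  · rw [trans_apply_of_le_half _ _ h.ge, trans_apply_of_le_half _ _ h.ge, double_eq_one h.le,
      γ₁.target, γ₂.target]
  · rw [trans_apply, trans_apply, dif_neg h.not_ge, dif_neg h.not_ge]

end Path

lemma HClose.trans_right {a b d : X} {f g : Path a b}
    (hfg : HClose f g) (c : Path b d) : HClose (f.trans c) (g.trans c) := by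
  intro n t ht0 htn hmono U hU hgU
  obtain ⟨m, -, hm⟩ : ∃ m ≤ n + 1, ∀ i, (t i : ℝ) < 1 / 2 ↔ (i : ℕ) < m :=
    (Subtype.mono_coe _ |>.comp hmono.monotone).exists_forall_lt_iff_val_lt _
  have hmn : m ≤ n := not_lt.1 <| (hm (Fin.last n)).not.1 (by rw [htn]; norm_num)
  -- the partition `t` truncated at the first point `≥ 1/2` and rescaled by `double`
  let s : Fin (m + 1) → I := fun j => double (t (Fin.castLE (by omega) j))
  have hs_lt : ∀ j : Fin (m + 1), (j : ℕ) < m → (t (Fin.castLE (by omega) j) : ℝ) < 1 / 2 :=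
    fun j hj => (hm _).2 hj
  have hs0 : s 0 = 0 := by simp only [s, Fin.castLE_zero, ht0, double_zero]
  have hsm : s (Fin.last m) = 1 :=
    double_eq_one (not_lt.1 fun h => absurd ((hm _).1 h) (lt_irrefl m))
  have hsmono : StrictMono s := by
    intro j j' hjj'
    exact double_lt_double (hs_lt j (by omega)) (hmono ((Fin.castLE_lt_castLE_iff _).2 hjj'))
  have hgU' : ∀ j : Fin m, g '' Set.Icc (s j.castSucc) (s j.succ) ⊆ U (Fin.castLE hmn j) := by
    rintro j _ ⟨p, hp, rfl⟩
    have hp₁ : 2 * (t (Fin.castLE hmn j).castSucc : ℝ) ≤ p :=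
      (coe_double_of_le_half (hs_lt j.castSucc j.2).le).symm.trans_le hp.1
    have hp₂ : (p : ℝ) ≤ 2 * t (Fin.castLE hmn j).succ :=
      (Subtype.coe_le_coe.2 hp.2).trans (coe_double_le _)
    rw [← Path.trans_apply_half g c p]
    refine hgU _ ⟨half p, ⟨?_, ?_⟩, rfl⟩ <;>
      simp only [← Subtype.coe_le_coe, half] <;> linarith
  obtain ⟨γ, hγU, hγg, hγf⟩ := hfg m s hs0 hsm hsmono _ (fun j => hU _) hgU'
  refine ⟨γ.trans c, ?_, ?_, hγf.hcomp (Path.Homotopic.refl c)⟩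
  · rintro i _ ⟨τ, hτ, rfl⟩
    rcases le_or_gt (1 / 2) (τ : ℝ) with hτ' | hτ'
    · rw [Path.trans_apply_eq_of_half_le γ g c hτ']
      exact hgU i ⟨τ, hτ, rfl⟩
    · have hi : (i : ℕ) < m := (hm i.castSucc).1 (lt_of_le_of_lt hτ.1 hτ')
      rw [Path.trans_apply_of_le_half _ _ hτ'.le]
      exact hγU ⟨i, hi⟩
        ⟨double τ, ⟨monotone_double hτ.1, monotone_double hτ.2⟩, rfl⟩
  · intro i
    rcases le_or_gt (1 / 2) (t i : ℝ) with h | h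
    · exact Path.trans_apply_eq_of_half_le γ g c h
    · rw [Path.trans_apply_of_le_half _ _ h.le, Path.trans_apply_of_le_half _ _ h.le]
      exact hγg ⟨i, (hm i).1 h |>.trans m.lt_succ_self⟩

section pathClass

variable {x : X}

lemma pathClass_trans (f g : Path x x) : pathClass (f.trans g) = pathClass g * pathClass f := rfl

lemma pathClass_symm (f : Path x x) : pathClass f.symm = (pathClass f)⁻¹ := rfl

lemma pathClass_surjective : Function.Surjective (pathClass (x := x)) :=
  fun p => ⟨(FundamentalGroup.toPath p).out, Quotient.out_eq _⟩

end pathClass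

open Pointwise in
/-- for a subgroup `H` of `π₁(X, x)`, `π_H^qs(X, x) = H · π₁^qs(X, x)`. -/
theorem stmt7 (x : X) (H : Subgroup (FundamentalGroup X x)) :
    qsSet x ↑H = (H : Set (FundamentalGroup X x)) * qs x := by
  ext p
  constructor
  · rintro ⟨f, h, rfl, hh, hfh⟩
    refine ⟨pathClass h, hh, pathClass (f.trans h.symm),
      ⟨f.trans h.symm, h.trans h.symm, rfl, ?_, hfh.trans_right h.symm⟩, ?_⟩
    · rw [pathClass_trans, pathClass_symm, inv_mul_cancel]
      exact one_mem _
    · show pathClass h * pathClass (f.trans h.symm) = pathClass f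
      rw [pathClass_trans, pathClass_symm, mul_inv_cancel_left]
  · rintro ⟨u, hu, _, ⟨f, h, rfl, hh, hfh⟩, rfl⟩
    obtain ⟨a, rfl⟩ := pathClass_surjective u
    refine ⟨f.trans a, h.trans a, rfl, ?_, hfh.trans_right a⟩
    rwa [pathClass_trans, Subgroup.mem_bot.1 hh, mul_one]
end
end

section
/- Let X be a topological space, let H be a subgroup of π₁(X, x), and let λ be a path in X from x to y. Then the map β_λ : π_H^qs(X, x) → π_{[λ]⁻¹H[λ]}^qs(X, y) defined by β_λ([f]) = [λ⁻¹ * f * λ] is a group isomorphism, where [λ]⁻¹H[λ] = { [λ⁻¹ * h * λ] | [h] ∈ H }. In particular, π₁^qs(X, x) ≅ π₁^qs(X, y) whenever x and y lie in the same path component of X. -/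
/-!
Conjugation by `λ` is the standard isomorphism `π₁(X, x) ≃* π₁(X, y)`
(`fundamentalGroupMulEquivOfPath`), and it carries `π_H^qs(X, x)` onto
`π_{[λ]⁻¹H[λ]}^qs(X, y)` because homotopic closeness survives concatenation with a fixed path.
For concatenation on the right, a partition `t` adapted to `g * ρ` is cut at its first point
`t m ≥ 1/2`; doubling `t 0, …, t m` (and clamping the last one to `1`) gives a partition adapted
to `g`, and a path `γ` close to `g` along it yields the path `γ * ρ` close to `g * ρ`.
Concatenation on the left follows by reversing paths, as reversal preserves closeness
(use the reflected partition).
-/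

open unitInterval

noncomputable section

attribute [local instance] Path.Homotopic.setoid

variable {X Y : Type*} [TopologicalSpace X] [TopologicalSpace Y]

namespace unitInterval

theorem image_symm_Icc (a b : I) : σ '' Set.Icc a b = Set.Icc (σ b) (σ a) := by
  ext u
  rw [symm_involutive.image_eq_preimage_symm]
  simp only [Set.mem_preimage, Set.mem_Icc, le_symm_comm, symm_le_comm, and_comm]

/-- `u ↦ min (2u) 1`; on `[0, 1/2]` it undoes the rescaling of the first half of
`γ.trans ρ`. -/
def doubleClamp (u : I) : I :=
  Set.projIcc 0 1 zero_le_one (2 * u)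

theorem coe_doubleClamp_of_le_half {u : I} (hu : (u : ℝ) ≤ 1 / 2) :
    (doubleClamp u : ℝ) = 2 * u := by
  rw [doubleClamp, Set.projIcc_of_mem]
  exact ⟨by linarith [u.2.1], by linarith⟩

theorem doubleClamp_of_half_le {u : I} (hu : 1 / 2 ≤ (u : ℝ)) : doubleClamp u = 1 :=
  Set.projIcc_of_right_le _ (by linarith)

theorem coe_doubleClamp_le (u : I) : (doubleClamp u : ℝ) ≤ 2 * u := by
  rcases le_total (u : ℝ) (1 / 2) with hu | hu
  · rw [coe_doubleClamp_of_le_half hu]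
  · rw [doubleClamp_of_half_le hu]
    push_cast
    linarith

theorem monotone_doubleClamp : Monotone doubleClamp :=
  (Set.monotone_projIcc _).comp fun _ _ h => by simpa using h

theorem doubleClamp_lt_doubleClamp {u v : I} (huv : u < v) (hu : (u : ℝ) < 1 / 2) :
    doubleClamp u < doubleClamp v := by
  rw [← Subtype.coe_lt_coe, coe_doubleClamp_of_le_half hu.le]
  rcases le_total (v : ℝ) (1 / 2) with hv | hv
  · rw [coe_doubleClamp_of_le_half hv]
    exact mul_lt_mul_of_pos_left huv two_pos
  · rw [doubleClamp_of_half_le hv]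
    push_cast
    linarith

theorem Icc_doubleClamp_subset {s t : I} (hs : (s : ℝ) ≤ 1 / 2) :
    Set.Icc (doubleClamp s) (doubleClamp t) ⊆
      doubleClamp '' {u | u ∈ Set.Icc s t ∧ (u : ℝ) ≤ 1 / 2} := by
  rintro v ⟨hsv, hvt⟩
  have hv : (v : ℝ) / 2 ∈ I := ⟨by linarith [v.2.1], by linarith [v.2.2]⟩
  refine ⟨⟨v / 2, hv⟩, ⟨⟨?_, ?_⟩, by linarith [v.2.2]⟩, ?_⟩
  · rw [← Subtype.coe_le_coe, coe_doubleClamp_of_le_half hs] at hsv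
    change (s : ℝ) ≤ v / 2
    linarith
  · change (v : ℝ) / 2 ≤ t
    linarith [Subtype.coe_le_coe.mpr hvt, coe_doubleClamp_le t]
  · apply Subtype.ext
    rw [coe_doubleClamp_of_le_half (by linarith [v.2.2])]
    ring

end unitInterval

namespace Path

variable {a b c : X}

theorem trans_apply_of_le_half_s10 (γ : Path a b) (ρ : Path b c) {u : I} (hu : (u : ℝ) ≤ 1 / 2) :
    (γ.trans ρ) u = γ (doubleClamp u) := by
  change ite _ _ _ = _
  rw [if_pos hu]
  rfl

theorem trans_apply_eq_of_half_le_s10 (γ γ' : Path a b) (ρ : Path b c) {u : I}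
    (hu : 1 / 2 ≤ (u : ℝ)) : (γ.trans ρ) u = (γ'.trans ρ) u := by
  change ite _ _ _ = ite _ _ _
  split_ifs
  · rw [extend_of_one_le _ (by linarith), extend_of_one_le _ (by linarith)]
  · rfl

end Path

namespace HClose

variable {a b c : X} {f g : Path a b}

theorem symm (hc : HClose f g) : HClose f.symm g.symm := by
  intro n t h0 h1 hmono U hU hcov
  let t' : Fin (n + 1) → I := fun i => σ (t i.rev)
  have ht' : ∀ i : Fin n,
      Set.Icc (t' i.castSucc) (t' i.succ) = σ '' Set.Icc (t i.rev.castSucc) (t i.rev.succ) := by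
    intro i
    simp only [t', image_symm_Icc, Fin.rev_castSucc, Fin.rev_succ]
  have hcov' : ∀ i : Fin n, g '' Set.Icc (t' i.castSucc) (t' i.succ) ⊆ U i.rev := by
    intro i
    rw [ht', ← Set.image_comp]
    exact hcov i.rev
  obtain ⟨γ, hγU, hγt, hγf⟩ := hc n t' (by simp [t', h1]) (by simp [t', h0])
    (fun i j hij => symm_lt_symm.mpr (hmono (Fin.rev_lt_rev.mpr hij))) (fun i => U i.rev)
    (fun i => hU i.rev) hcov'
  refine ⟨γ.symm, fun i => ?_, fun i => ?_, hγf.symm₂⟩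
  · have := hγU i.rev
    rwa [ht', Fin.rev_rev, ← Set.image_comp] at this
  · have := hγt i.rev
    simpa [t'] using this

theorem trans_right_s10 (hc : HClose f g) (ρ : Path b c) : HClose (f.trans ρ) (g.trans ρ) := by
  intro n t h0 h1 hmono U hU hcov
  obtain ⟨m, hm, hmin⟩ :=
    wellFounded_lt.has_min {i | 1 / 2 ≤ (t i : ℝ)} ⟨Fin.last n, by norm_num [h1]⟩
  replace hmin : ∀ k < m, (t k : ℝ) < 1 / 2 := fun k hk => not_le.mp fun h => hmin k h hk
  have half_le : ∀ k, m ≤ k → 1 / 2 ≤ (t k : ℝ) := fun k hk =>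
    le_trans hm (Subtype.coe_le_coe.mpr (hmono.monotone hk))
  -- the points `t k` with `k ≤ m`, pulled back to the domain of `g`
  let s : Fin (m + 1) → I := fun k => doubleClamp (t (Fin.castLE m.isLt k))
  have hs : StrictMono s := fun k l hkl =>
    doubleClamp_lt_doubleClamp (hmono hkl) (hmin _ (by
      rw [Fin.lt_def] at hkl ⊢; simp only [Fin.val_castLE]; omega))
  obtain ⟨γ, hγU, hγt, hγf⟩ := hc m s
    (by simp [s, h0, doubleClamp]) (doubleClamp_of_half_le hm) hs
    (fun k => U (Fin.castLE (Nat.le_of_lt_succ m.isLt) k)) (fun k => hU _) fun k => by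
      rintro _ ⟨v, hv, rfl⟩
      obtain ⟨u, ⟨hu, hu_half⟩, rfl⟩ :=
        Icc_doubleClamp_subset (hmin _ (Fin.lt_def.mpr k.isLt)).le hv
      rw [← Path.trans_apply_of_le_half_s10 g ρ hu_half]
      exact hcov _ ⟨u, hu, rfl⟩
  refine ⟨γ.trans ρ, fun i => ?_, fun i => ?_, hγf.hcomp (Path.Homotopic.refl ρ)⟩
  · rintro _ ⟨u, hu, rfl⟩
    by_cases hi : (i : ℕ) < m ∧ (u : ℝ) ≤ 1 / 2
    · rw [Path.trans_apply_of_le_half_s10 γ ρ hi.2]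
      exact hγU ⟨i, hi.1⟩
        ⟨doubleClamp u, ⟨monotone_doubleClamp hu.1, monotone_doubleClamp hu.2⟩, rfl⟩
    · have hu_half : 1 / 2 ≤ (u : ℝ) := by
        rcases lt_or_ge (i : ℕ) m with him | him
        · exact (not_le.mp fun h => hi ⟨him, h⟩).le
        · exact (half_le _ (Fin.le_def.mpr him)).trans (Subtype.coe_le_coe.mpr hu.1)
      rw [Path.trans_apply_eq_of_half_le_s10 γ g ρ hu_half]
      exact hcov i ⟨u, hu, rfl⟩
  · by_cases hi : i < m
    · rw [Path.trans_apply_of_le_half_s10 γ ρ (hmin i hi).le,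
        Path.trans_apply_of_le_half_s10 g ρ (hmin i hi).le]
      exact hγt ⟨i, by rw [Fin.lt_def] at hi; omega⟩
    · exact Path.trans_apply_eq_of_half_le_s10 γ g ρ (half_le i (not_lt.mp hi))

theorem trans_left (hc : HClose f g) (μ : Path c a) : HClose (μ.trans f) (μ.trans g) := by
  simpa using (hc.symm.trans_right_s10 μ.symm).symm

theorem conj {x y : X} {f g : Path x x} (hc : HClose f g) (lam : Path x y) :
    HClose ((lam.symm.trans f).trans lam) ((lam.symm.trans g).trans lam) :=
  (hc.trans_left lam.symm).trans_right_s10 lam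

end HClose

open FundamentalGroup CategoryTheory

section Conjugation

variable {x y : X}

theorem pathClass_surjective_s10 :
    Function.Surjective (pathClass : Path x x → FundamentalGroup X x) :=
  Quotient.exists_rep

theorem fundamentalGroupMulEquivOfPath_pathClass (lam : Path x y) (f : Path x x) :
    fundamentalGroupMulEquivOfPath lam (pathClass f) =
      pathClass ((lam.symm.trans f).trans lam) := by
  rw [fundamentalGroupMulEquivOfPath, Iso.conj_apply, ← Category.assoc]
  rfl

theorem fundamentalGroupMulEquivOfPath_symm_pathClass (lam : Path x y) (f : Path y y) :
    (fundamentalGroupMulEquivOfPath lam).symm (pathClass f) =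
      pathClass ((lam.trans f).trans lam.symm) := by
  change ((Groupoid.isoEquivHom (FundamentalGroupoid.mk x) (FundamentalGroupoid.mk y)).symm
    ⟦lam⟧).symm.conj (pathClass f) = _
  rw [Iso.conj_apply, ← Category.assoc]
  rfl

theorem setOf_pathClass_conj_eq_image (lam : Path x y) (H : Set (FundamentalGroup X x)) :
    { q | ∃ h : Path x x, pathClass h ∈ H ∧ q = pathClass ((lam.symm.trans h).trans lam) } =
      fundamentalGroupMulEquivOfPath lam '' H := by
  ext q
  constructor
  · rintro ⟨h, hH, rfl⟩
    exact ⟨_, hH, fundamentalGroupMulEquivOfPath_pathClass lam h⟩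
  · rintro ⟨p, hp, rfl⟩
    obtain ⟨h, rfl⟩ := pathClass_surjective_s10 p
    exact ⟨h, hp, fundamentalGroupMulEquivOfPath_pathClass lam h⟩

theorem image_fundamentalGroupMulEquivOfPath_qsSet (lam : Path x y)
    (H : Set (FundamentalGroup X x)) :
    fundamentalGroupMulEquivOfPath lam '' qsSet x H =
      qsSet y (fundamentalGroupMulEquivOfPath lam '' H) := by
  set Φ := fundamentalGroupMulEquivOfPath lam
  apply Set.Subset.antisymm
  · rintro _ ⟨_, ⟨f, h, rfl, hH, hfh⟩, rfl⟩
    exact ⟨_, _, (fundamentalGroupMulEquivOfPath_pathClass lam f).symm,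
      ⟨_, hH, fundamentalGroupMulEquivOfPath_pathClass lam h⟩, hfh.conj lam⟩
  · rintro _ ⟨f, h, rfl, ⟨p, hp, hph⟩, hfh⟩
    refine ⟨Φ.symm (pathClass f),
      ⟨(lam.trans f).trans lam.symm, (lam.trans h).trans lam.symm,
        (fundamentalGroupMulEquivOfPath_symm_pathClass lam f).symm, ?_, ?_⟩,
      Φ.apply_symm_apply _⟩
    · rwa [← fundamentalGroupMulEquivOfPath_symm_pathClass, ← hph, Φ.symm_apply_apply]
    · simpa using hfh.conj lam.symm

theorem mem_qsSet_iff_fundamentalGroupMulEquivOfPath (lam : Path x y)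
    (H : Set (FundamentalGroup X x)) (p : FundamentalGroup X x) :
    p ∈ qsSet x H ↔ fundamentalGroupMulEquivOfPath lam p ∈
      qsSet y (fundamentalGroupMulEquivOfPath lam '' H) := by
  rw [← image_fundamentalGroupMulEquivOfPath_qsSet, (MulEquiv.injective _).mem_set_image]

end Conjugation

/-- for a subgroup `H` of `π₁(X, x)` and a path `λ` from `x` to `y`,
conjugation by `λ` gives a group isomorphism `π_H^qs(X, x) ≅ π_{[λ]⁻¹H[λ]}^qs(X, y)`;
in particular `π₁^qs(X, x) ≅ π₁^qs(X, y)` for `x, y` in the same path component. -/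
theorem stmt10 {x y : X} (H : Subgroup (FundamentalGroup X x)) (lam : Path x y) :
    (∃ e : qsSet x (H : Set (FundamentalGroup X x)) ≃
        qsSet y { q | ∃ h : Path x x, pathClass h ∈ H ∧
          q = pathClass ((lam.symm.trans h).trans lam) },
      (∀ (f : Path x x) (hf : pathClass f ∈ qsSet x (H : Set (FundamentalGroup X x))),
        (e ⟨pathClass f, hf⟩ : FundamentalGroup X y)
          = pathClass ((lam.symm.trans f).trans lam)) ∧
      (∀ p q (hp : p ∈ qsSet x (H : Set (FundamentalGroup X x)))
          (hq : q ∈ qsSet x (H : Set (FundamentalGroup X x)))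
          (hpq : p * q ∈ qsSet x (H : Set (FundamentalGroup X x))),
        (e ⟨p * q, hpq⟩ : FundamentalGroup X y)
          = (e ⟨p, hp⟩ : FundamentalGroup X y) * (e ⟨q, hq⟩ : FundamentalGroup X y))) ∧
    (∃ e' : qs x ≃ qs y,
      ∀ p q (hp : p ∈ qs x) (hq : q ∈ qs x) (hpq : p * q ∈ qs x),
        (e' ⟨p * q, hpq⟩ : FundamentalGroup X y)
          = (e' ⟨p, hp⟩ : FundamentalGroup X y) * (e' ⟨q, hq⟩ : FundamentalGroup X y)) := by
  set Φ := fundamentalGroupMulEquivOfPath lam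
  have hΦ_bot : Φ '' ((⊥ : Subgroup (FundamentalGroup X x)) : Set (FundamentalGroup X x)) =
      ((⊥ : Subgroup (FundamentalGroup X y)) : Set (FundamentalGroup X y)) := by
    rw [Subgroup.coe_bot, Subgroup.coe_bot, Set.image_singleton, map_one]
  refine ⟨⟨Φ.toEquiv.subtypeEquiv fun p => ?_,
      fun f _ => fundamentalGroupMulEquivOfPath_pathClass lam f, fun p q _ _ _ => map_mul Φ p q⟩,
    ⟨Φ.toEquiv.subtypeEquiv fun p => ?_, fun p q _ _ _ => map_mul Φ p q⟩⟩
  · have hS := setOf_pathClass_conj_eq_image lam (H : Set (FundamentalGroup X x))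
    simp only [SetLike.mem_coe] at hS
    rw [hS]
    exact mem_qsSet_iff_fundamentalGroupMulEquivOfPath lam _ p
  · rw [qs, qs, ← hΦ_bot]
    exact mem_qsSet_iff_fundamentalGroupMulEquivOfPath lam _ p
end
end

section
/- Let X be a topological space and x ∈ X. If X is homotopically path Hausdorff (relative to the trivial subgroup of π₁(X, x)), then π_H^qs(X, x) = H for every subgroup H of π₁(X, x). -/
open unitInterval

noncomputable section

attribute [local instance] Path.Homotopic.setoid

variable {X Y : Type*} [TopologicalSpace X] [TopologicalSpace Y]

lemma pathClass_eq_pathClass_iff {x : X} {f g : Path x x} :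
    pathClass f = pathClass g ↔ f.Homotopic g :=
  Quotient.eq

lemma pathClass_eq_one_iff {x : X} {f : Path x x} :
    pathClass f = 1 ↔ f.Homotopic (Path.refl x) :=
  Quotient.eq

lemma pathClass_trans_symm_eq_one_iff {x y : X} {α β : Path x y} :
    pathClass (α.trans β.symm) = 1 ↔ α.Homotopic β := by
  rw [pathClass_eq_one_iff]
  refine ⟨fun h => ?_, fun h => (h.hcomp (.refl _)).trans (.trans_symm β)⟩
  rw [← Path.Homotopic.Quotient.eq] at h ⊢
  calc Path.Homotopic.Quotient.mk α
      = ((Path.Homotopic.Quotient.mk α).trans (Path.Homotopic.Quotient.mk β).symm).trans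
          (Path.Homotopic.Quotient.mk β) := by simp
    _ = _ := by rw [← Path.Homotopic.Quotient.mk_symm, ← Path.Homotopic.Quotient.mk_trans, h,
          Path.Homotopic.Quotient.mk_refl, Path.Homotopic.Quotient.refl_trans]

lemma HClose.refl {a b : X} (f : Path a b) : HClose f f :=
  fun _ _ _ _ _ _ _ hf => ⟨f, hf, fun _ => rfl, .refl f⟩

lemma subset_qsSet (x : X) (H : Set (FundamentalGroup X x)) : H ⊆ qsSet x H := by
  intro p hp
  obtain ⟨f, rfl⟩ := Quotient.exists_rep (s := Path.Homotopic.setoid x x) p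
  exact ⟨f, f, rfl, hp, .refl f⟩

/-- In a homotopically path Hausdorff space, homotopic closeness is homotopy: a path not
homotopic to `g` would be separated from `g` by open sets along a partition, yet closeness
produces a path homotopic to it inside exactly those sets. -/
lemma HClose.homotopic {x y : X}
    (hX : HPHausdorffRel x ((⊥ : Subgroup (FundamentalGroup X x)) : Set (FundamentalGroup X x)))
    {f g : Path x y} (hfg : HClose f g) : f.Homotopic g := by
  by_contra hne
  obtain ⟨n, t, ht0, ht1, ht, U, hUo, hgU, hsep⟩ :=
    hX y g f fun hgf => hne (pathClass_trans_symm_eq_one_iff.mp hgf).symm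
  obtain ⟨γ, hγU, hγt, hγf⟩ := hfg n t ht0 ht1 ht U hUo hgU
  exact hsep γ hγU hγt (pathClass_trans_symm_eq_one_iff.mpr hγf)

lemma qsSet_subset {x : X}
    (hX : HPHausdorffRel x ((⊥ : Subgroup (FundamentalGroup X x)) : Set (FundamentalGroup X x)))
    (H : Set (FundamentalGroup X x)) : qsSet x H ⊆ H := by
  rintro _ ⟨f, g, rfl, hg, hfg⟩
  rwa [pathClass_eq_pathClass_iff.mpr (hfg.homotopic hX)]

/-- if `X` is homotopically path Hausdorff (relative to the trivial
subgroup), then `π_H^qs(X, x) = H` for every subgroup `H` of `π₁(X, x)`. -/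
theorem stmt16 (x : X)
    (h : HPHausdorffRel x ((⊥ : Subgroup (FundamentalGroup X x)) : Set (FundamentalGroup X x))) :
    ∀ H : Subgroup (FundamentalGroup X x),
      qsSet x ↑H = (H : Set (FundamentalGroup X x)) :=
  fun H => (qsSet_subset h H).antisymm (subset_qsSet x H)
end
end
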